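/- arXiv:1606.03705 — 3 statements merged into one kernel-verified Lean document; each statement's English description precedes it below -/
import Mathlib

section
/- Let G be a connected multigraph with s+1 vertices and g + s edges (g ≥ 0) in which every vertex of valency ≤ 2 is marked, and suppose at most p vertices of valency 1 are allowed and at most p vertices of valency at most 2 are allowed (c₁ ≤ p and c₁ + c₂ ≤ p), and there are no isolated vertices (c₀ = 0) unless s = 0 and g = 0. Then s ≤ 2g + 2p - 3 whenever (g,p) ≠ (0,1) with s ≥ 1; and if g = 0 and p = 1 then s = 0. -/
/-- Valency count bound: for a connected multigraph with `s+1` vertices and `g+s`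
edges, with `cᵢ` vertices of valency `i`, the constraints `c₁ ≤ p`, `c₁+c₂ ≤ p`
and `c₀ = 0` (when `g ≥ 1` or `s ≥ 1`) give `s = 0` if `g = 0, p = 1`, and
otherwise `s ≤ 2g + 2p - 3`. -/
theorem stmt5 (g s p : ℕ) (hp : 1 ≤ p) (c : ℕ →₀ ℕ)
    (hdeg : (c.sum fun i m => i * m) = 2 * (g + s))
    (hcard : (c.sum fun _ m => m) = s + 1)
    (hc1 : c 1 ≤ p) (hc12 : c 1 + c 2 ≤ p)
    (hc0 : 1 ≤ g ∨ 1 ≤ s → c 0 = 0) :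
    (g = 0 ∧ p = 1 → s = 0) ∧ (¬(g = 0 ∧ p = 1) → (s : ℤ) ≤ 2 * g + 2 * p - 3) := by
  have hsum0 : (c.sum fun i m => if i = 0 then 3 * m else 0) = 3 * c 0 := by
    rw [Finsupp.sum_ite_eq']
    split_ifs with h
    · rfl
    · simp [Finsupp.notMem_support_iff.mp h]
  have hsum1 : (c.sum fun i m => if i = 1 then 2 * m else 0) = 2 * c 1 := by
    rw [Finsupp.sum_ite_eq']
    split_ifs with h
    · rfl
    · simp [Finsupp.notMem_support_iff.mp h]
  have hsum2 : (c.sum fun i m => if i = 2 then m else 0) = c 2 := by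
    rw [Finsupp.sum_ite_eq']
    split_ifs with h
    · rfl
    · simp [Finsupp.notMem_support_iff.mp h]
  have key : 3 * (s + 1) ≤ 2 * (g + s) + (3 * c 0 + 2 * c 1 + c 2) := by
    calc 3 * (s + 1) = c.sum fun i m => 3 * m := by
          rw [← hcard]; simp [Finsupp.sum, Finset.mul_sum]
      _ ≤ c.sum fun i m => i * m + ((if i = 0 then 3 * m else 0) +
            ((if i = 1 then 2 * m else 0) + (if i = 2 then m else 0))) := by
          apply Finsupp.sum_le_sum
          intro i _
          rcases i with _ | _ | _ | i <;> simp <;> nlinarith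
      _ = (c.sum fun i m => i * m) + ((c.sum fun i m => if i = 0 then 3 * m else 0) +
            ((c.sum fun i m => if i = 1 then 2 * m else 0) +
             (c.sum fun i m => if i = 2 then m else 0))) := by
          simp [Finsupp.sum, Finset.sum_add_distrib]
      _ = 2 * (g + s) + (3 * c 0 + 2 * c 1 + c 2) := by
          rw [hdeg, hsum0, hsum1, hsum2]; ring
  rcases Nat.eq_zero_or_pos s with hs | hs
  · subst hs
    exact ⟨fun _ => rfl, fun h => by omega⟩
  · have h0 : c 0 = 0 := hc0 (Or.inr hs)
    constructor <;> intro h <;> omega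
end

section
/- In the stratum H¹(a₁,…,aₙ,-1^p) of meromorphic 1-forms of genus zero whose poles are all simple (so p = 2 + ∑aᵢ), the reducibility index κ equals n - 1: there exists a graph representation of level n-1 given by the linear graph A_n with families {a₁,-1^{1+a₁}}, {a₂,-1^{1+a₂}}, {aᵢ,-1^{aᵢ}} for 3 ≤ i ≤ n. -/
/-- Valency of a vertex in a multigraph given by a multiset of (oriented) edges;
loops count twice. -/
def mdeg {s : ℕ} (E : Multiset (Fin (s + 1) × Fin (s + 1))) (v : Fin (s + 1)) : ℕ :=
  (E.filter (fun e => e.1 = v)).card + (E.filter (fun e => e.2 = v)).card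

/-- Reachability in the multigraph. -/
def mreach {s : ℕ} (E : Multiset (Fin (s + 1) × Fin (s + 1)))
    (u v : Fin (s + 1)) : Prop :=
  Relation.ReflTransGen (fun x y => (x, y) ∈ E ∨ (y, x) ∈ E) u v

/-- A (pure, genus-zero, `k = 1`) graph representation of level `s` of the stratum
`H¹(a₁,…,aₙ,-b₁,…,-b_p)`: a connected multigraph on `s+1` vertices, an assignment
of the singularities to vertices such that every vertex gets a zero, the sum of
orders at each vertex is valency minus 2, and each side of any bridge contains a
pole. -/
structure GraphRep (n p : ℕ) (a : Fin n → ℤ) (b : Fin p → ℤ) (s : ℕ) where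
  edges : Multiset (Fin (s + 1) × Fin (s + 1))
  conn : ∀ u v, mreach edges u v
  fam : Fin n ⊕ Fin p → Fin (s + 1)
  hasZero : ∀ v, ∃ i : Fin n, fam (Sum.inl i) = v
  degCond : ∀ v,
    (∑ i ∈ Finset.univ.filter (fun i : Fin n => fam (Sum.inl i) = v), a i)
      - (∑ j ∈ Finset.univ.filter (fun j : Fin p => fam (Sum.inr j) = v), b j)
      = (mdeg edges v : ℤ) - 2
  bridge : ∀ e ∈ edges, ¬ mreach (edges.erase e) e.1 e.2 →
    (∃ j : Fin p, mreach (edges.erase e) (fam (Sum.inr j)) e.1) ∧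
    (∃ j : Fin p, mreach (edges.erase e) (fam (Sum.inr j)) e.2)

def sigFiberEquiv {ι : Type*} (β : ι → Type*) (v : ι) :
    {x : Σ i, β i // x.1 = v} ≃ β v where
  toFun := fun x => x.2 ▸ x.1.2
  invFun := fun b => ⟨⟨v, b⟩, rfl⟩
  left_inv := by rintro ⟨⟨i, b⟩, rfl⟩; rfl
  right_inv := fun b => rfl

/-- In the stratum `H¹(a₁,…,aₙ,-1^p)` of genus zero (so `p = 2 + ∑aᵢ`), the
reducibility index equals `n - 1`: there is a graph representation of level
`n - 1` (the path graph with the indicated families), and no representation of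
higher level exists. -/
theorem stmt11 (n : ℕ) (hn : 2 ≤ n) (a : Fin n → ℤ) (ha : ∀ i, 0 < a i)
    (p : ℕ) (hp : (p : ℤ) = 2 + ∑ i, a i) :
    Nonempty (GraphRep n p a (fun _ => 1) (n - 1)) ∧
    ∀ s : ℕ, Nonempty (GraphRep n p a (fun _ => 1) s) → s ≤ n - 1 := by
  constructor
  swap
  · rintro s ⟨G⟩
    have hsurj : Function.Surjective (fun i : Fin n => G.fam (Sum.inl i)) := by
      intro v
      obtain ⟨i, hi⟩ := G.hasZero v
      exact ⟨i, hi⟩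
    have := Fintype.card_le_of_surjective _ hsurj
    simp only [Fintype.card_fin] at this
    omega
  · obtain ⟨m, rfl⟩ : ∃ m, n = m + 1 := ⟨n - 1, by omega⟩
    have hm : 1 ≤ m := by omega
    set c : Fin (m+1) → ℕ := fun v =>
      (a v).toNat + (if v = 0 then 1 else 0) + (if v = Fin.last m then 1 else 0) with hc
    have hcount : ∀ v, (c v : ℤ) = a v + (if v = 0 then 1 else 0) + (if v = Fin.last m then 1 else 0) := by
      intro v
      rw [hc]
      push_cast [Int.toNat_of_nonneg (ha v).le]
      rfl
    have hcard : Fintype.card (Σ v : Fin (m+1), Fin (c v)) = p := by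
      rw [Fintype.card_sigma]
      simp only [Fintype.card_fin]
      have : ((∑ v, c v : ℕ) : ℤ) = (p : ℤ) := by
        push_cast
        rw [Finset.sum_congr rfl (fun v _ => hcount v)]
        rw [Finset.sum_add_distrib, Finset.sum_add_distrib, hp]
        rw [Finset.sum_ite_eq' Finset.univ (0 : Fin (m+1)) (fun _ => (1:ℤ))]
        rw [Finset.sum_ite_eq' Finset.univ (Fin.last m) (fun _ => (1:ℤ))]
        simp only [Finset.mem_univ, if_true]
        ring
      exact_mod_cast this
    let e : (Σ v : Fin (m+1), Fin (c v)) ≃ Fin p := Fintype.equivOfCardEq (hcard.trans (Fintype.card_fin p).symm)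
    let f : Fin m → Fin (m+1) × Fin (m+1) := fun i => (i.castSucc, i.succ)
    let E : Multiset (Fin (m+1) × Fin (m+1)) := Multiset.map f Finset.univ.val
    have hfiber : ∀ v, (Finset.univ.filter (fun j : Fin p => (e.symm j).1 = v)).card = c v := by
      intro v
      rw [← Fintype.card_subtype,
        Fintype.card_congr ((Equiv.subtypeEquiv e.symm (fun j => Iff.rfl)).trans
          (sigFiberEquiv _ v)), Fintype.card_fin]
    have hc1 : ∀ v : Fin (m+1), (Finset.univ.filter (fun i : Fin m => i.castSucc = v)).card
        = if v.val < m then 1 else 0 := by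
      intro v
      split_ifs with hv
      · rw [Finset.card_eq_one]
        refine ⟨⟨v.val, hv⟩, ?_⟩
        ext i
        simp [Fin.ext_iff]
      · rw [Finset.card_eq_zero]
        ext i
        simp only [Finset.mem_filter, Finset.mem_univ, true_and, Finset.notMem_empty, iff_false]
        intro h
        have := i.isLt
        rw [Fin.ext_iff] at h
        simp at h
        omega
    have hc2 : ∀ v : Fin (m+1), (Finset.univ.filter (fun i : Fin m => i.succ = v)).card
        = if 0 < v.val then 1 else 0 := by
      intro v
      have hvm := v.isLt
      split_ifs with hv
      · rw [Finset.card_eq_one]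
        refine ⟨⟨v.val - 1, by omega⟩, ?_⟩
        ext i
        simp [Fin.ext_iff]
        omega
      · rw [Finset.card_eq_zero]
        ext i
        simp only [Finset.mem_filter, Finset.mem_univ, true_and, Finset.notMem_empty, iff_false]
        intro h
        rw [Fin.ext_iff] at h
        simp at h
        omega
    have hdeg : ∀ v : Fin (m+1), mdeg E v
        = (if v.val < m then 1 else 0) + (if 0 < v.val then 1 else 0) := by
      intro v
      unfold mdeg
      show (Multiset.filter _ (Multiset.map f Finset.univ.val)).card
          + (Multiset.filter _ (Multiset.map f Finset.univ.val)).card = _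
      rw [Multiset.filter_map, Multiset.filter_map, Multiset.card_map, Multiset.card_map]
      have e1 : Multiset.filter ((fun e : Fin (m+1) × Fin (m+1) => e.1 = v) ∘ f) Finset.univ.val
          = Multiset.filter (fun i : Fin m => i.castSucc = v) Finset.univ.val :=
        Multiset.filter_congr (fun x _ => Iff.rfl)
      have e2 : Multiset.filter ((fun e : Fin (m+1) × Fin (m+1) => e.2 = v) ∘ f) Finset.univ.val
          = Multiset.filter (fun i : Fin m => i.succ = v) Finset.univ.val :=
        Multiset.filter_congr (fun x _ => Iff.rfl)
      rw [e1, e2]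
      rw [← Finset.filter_val, ← Finset.filter_val, ← Finset.card_def, ← Finset.card_def]
      rw [hc1, hc2]
    have hmemE : ∀ i : Fin m, (i.castSucc, i.succ) ∈ E :=
      fun i => Multiset.mem_map.2 ⟨i, by simp, rfl⟩
    have hsym : Symmetric (fun x y : Fin (m+1) => (x,y) ∈ E ∨ (y,x) ∈ E) :=
      fun x y h => h.symm
    have reach0 : ∀ v : Fin (m+1), mreach E 0 v := by
      intro v
      induction v using Fin.induction with
      | zero => exact Relation.ReflTransGen.refl
      | succ i ih => exact ih.tail (Or.inl (hmemE i))
    have hpole : ∀ v : Fin (m+1), ∃ j : Fin p, (e.symm j).1 = v := by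
      intro v
      have hcv : 0 < c v := by
        have h1 : 0 < (a v).toNat := by have := ha v; omega
        exact Nat.lt_of_lt_of_le h1 ((Nat.le_add_right _ _).trans (Nat.le_add_right _ _))
      exact ⟨e ⟨v, ⟨0, hcv⟩⟩, by simp⟩
    refine ⟨⟨E, ?_, Sum.elim id (fun j => (e.symm j).1), fun v => ⟨v, rfl⟩, ?_, ?_⟩⟩
    · intro u v
      exact ((@Relation.ReflTransGen.stdSymm _ _ ⟨fun _ _ h => hsym h⟩).symm _ _ (reach0 u)).trans (reach0 v)
    · intro v
      rw [hdeg]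
      simp only [Sum.elim_inl, Sum.elim_inr, id]
      rw [Finset.sum_const, nsmul_eq_mul, mul_one]
      erw [hfiber]
      rw [hcount]
      erw [show (Finset.univ.filter (fun i : Fin (m+1) => i = v)) = {v} by simp [Finset.filter_eq']]
      rw [Finset.sum_singleton]
      have hvm := v.isLt
      simp only [Fin.ext_iff, Fin.val_zero, Fin.val_last]
      split_ifs <;> omega
    · intro ed _ _
      refine ⟨?_, ?_⟩
      · obtain ⟨j, hj⟩ := hpole ed.1
        exact ⟨j, by simp [Sum.elim_inr, hj]; exact Relation.ReflTransGen.refl⟩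
      · obtain ⟨j, hj⟩ := hpole ed.2
        exact ⟨j, by simp [Sum.elim_inr, hj]; exact Relation.ReflTransGen.refl⟩
end

section
/- If in every graph representation of a genus-zero stratum the graph is a tree (no cycles), and every tree with at least 2 vertices has a leaf (vertex of valency 1), then a genus-zero stratum with k = 1 is irreducible (κ = 0) whenever no subfamily of the singularity pattern sums to -1: a level-s ≥ 1 representation would give a leaf vertex whose family sums to v - 2 = -1. -/
lemma sum_mdeg {s : ℕ} (E : Multiset (Fin (s + 1) × Fin (s + 1))) :
    ∑ v, mdeg E v = 2 * Multiset.card E := by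
  induction E using Multiset.induction with
  | empty => simp [mdeg]
  | cons e E ih =>
    have h : ∀ v, mdeg (e ::ₘ E) v =
        mdeg E v + ((if e.1 = v then 1 else 0) + (if e.2 = v then 1 else 0)) := by
      intro v
      simp only [mdeg, Multiset.filter_cons]
      split_ifs <;> simp <;> omega
    simp only [h, Finset.sum_add_distrib, ih, Finset.sum_ite_eq, Finset.mem_univ, if_true,
      Multiset.card_cons, Finset.sum_ite_eq']
    simp; ring

lemma aux_treeleaf (V : Type) [Fintype V] (G : SimpleGraph V) [DecidableRel G.Adj]
    (hT : G.IsTree) (hcard : 2 ≤ Fintype.card V) : ∃ v : V, G.degree v = 1 := by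
  classical
  have hdeg : ∀ v : V, 1 ≤ G.degree v := by
    intro v
    obtain ⟨u, hu⟩ := Fintype.exists_ne_of_one_lt_card (by omega) v
    obtain ⟨w⟩ := hT.isConnected v u
    have hnil : ¬ w.Nil := SimpleGraph.Walk.not_nil_of_ne (Ne.symm hu)
    have : G.Adj v (w.getVert 1) := w.adj_snd hnil
    have := G.degree_pos_iff_exists_adj v |>.2 ⟨_, this⟩
    omega
  by_contra h
  push_neg at h
  have hdeg2 : ∀ v : V, 2 ≤ G.degree v := fun v => by
    have := hdeg v; have := h v; omega
  have hsum := G.sum_degrees_eq_twice_card_edges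
  have hE := hT.card_edgeFinset
  have hlb : Fintype.card V * 2 ≤ ∑ v : V, G.degree v := by
    calc Fintype.card V * 2 = ∑ _v : V, 2 := by simp [Finset.sum_const, mul_comm]
    _ ≤ ∑ v : V, G.degree v := Finset.sum_le_sum fun v _ => hdeg2 v
  omega

lemma aux_partb (n p : ℕ) (a : Fin n → ℤ) (b : Fin p → ℤ)
    (hsum : ∑ i, a i - ∑ j, b j = -2)
    (hsub : ∀ (S : Finset (Fin n)) (T : Finset (Fin p)),
        ¬(S = ∅ ∧ T = ∅) → ¬(S = Finset.univ ∧ T = Finset.univ) →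
        ∑ i ∈ S, a i - ∑ j ∈ T, b j ≠ -1)
    (s : ℕ) (hs : 1 ≤ s) : ¬ Nonempty (GraphRep n p a b s) := by
  rintro ⟨R⟩
  set E := R.edges with hE
  have hfibA : ∑ v : Fin (s+1),
      (∑ i ∈ Finset.univ.filter (fun i : Fin n => R.fam (Sum.inl i) = v), a i) = ∑ i, a i := by
    rw [Finset.sum_fiberwise_eq_sum_filter]
    simp
  have hfibB : ∑ v : Fin (s+1),
      (∑ j ∈ Finset.univ.filter (fun j : Fin p => R.fam (Sum.inr j) = v), b j) = ∑ j, b j := by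
    rw [Finset.sum_fiberwise_eq_sum_filter]
    simp
  have hcardE : (Multiset.card E : ℤ) = s := by
    have h1 : ∑ v : Fin (s+1), ((mdeg E v : ℤ) - 2) = -2 := by
      have hc : ∑ v : Fin (s+1), ((mdeg E v : ℤ) - 2)
          = ∑ v : Fin (s+1),
            ((∑ i ∈ Finset.univ.filter (fun i : Fin n => R.fam (Sum.inl i) = v), a i)
              - (∑ j ∈ Finset.univ.filter (fun j : Fin p => R.fam (Sum.inr j) = v), b j)) :=
        Finset.sum_congr rfl (fun v _ => (R.degCond v).symm)
      rw [hc, Finset.sum_sub_distrib, hfibA, hfibB, hsum]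
    have h2 : ∑ v : Fin (s+1), (mdeg E v : ℤ) = 2 * Multiset.card E := by
      rw [← Nat.cast_sum]
      exact_mod_cast congrArg (Nat.cast : ℕ → ℤ) (sum_mdeg E)
    rw [Finset.sum_sub_distrib, h2] at h1
    simp at h1
    have : (2 : ℤ) * Multiset.card E = 2 * s := by linarith
    linarith
  have hdeg1 : ∀ v, 1 ≤ mdeg E v := by
    intro v
    have hu : ∃ u : Fin (s+1), u ≠ v := by
      refine ⟨if v = 0 then 1 else 0, ?_⟩
      split_ifs with h
      · subst h; intro hc; exact absurd (Fin.val_eq_of_eq hc) (by simp; omega)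
      · exact fun hc => h hc.symm
    obtain ⟨u, hu⟩ := hu
    have := R.conn v u
    rcases Relation.ReflTransGen.cases_head this with h | ⟨c, hvc, _⟩
    · exact absurd h.symm hu
    · rcases hvc with h | h
      · have : (v, c) ∈ E.filter (fun e => e.1 = v) := Multiset.mem_filter.2 ⟨h, rfl⟩
        have := Multiset.card_pos_iff_exists_mem.2 ⟨_, this⟩
        unfold mdeg; omega
      · have : (c, v) ∈ E.filter (fun e => e.2 = v) := Multiset.mem_filter.2 ⟨h, rfl⟩
        have := Multiset.card_pos_iff_exists_mem.2 ⟨_, this⟩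
        unfold mdeg; omega
  have hleaf : ∃ v, mdeg E v = 1 := by
    by_contra h
    push_neg at h
    have h2 : ∀ v, 2 ≤ mdeg E v := fun v => by have := hdeg1 v; have := h v; omega
    have hlb : (s+1) * 2 ≤ ∑ v : Fin (s+1), mdeg E v := by
      calc (s+1) * 2 = ∑ _v : Fin (s+1), 2 := by simp [Finset.sum_const, mul_comm]
      _ ≤ _ := Finset.sum_le_sum fun v _ => h2 v
    rw [sum_mdeg] at hlb
    have : (Multiset.card E : ℕ) = s := by exact_mod_cast hcardE
    omega
  obtain ⟨v, hv⟩ := hleaf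
  have hd := R.degCond v
  rw [hv] at hd
  norm_num at hd
  set S := Finset.univ.filter (fun i : Fin n => R.fam (Sum.inl i) = v) with hS
  set T := Finset.univ.filter (fun j : Fin p => R.fam (Sum.inr j) = v) with hT
  have hSne : S ≠ ∅ := by
    obtain ⟨i, hi⟩ := R.hasZero v
    intro hc
    have : i ∈ S := Finset.mem_filter.2 ⟨Finset.mem_univ _, hi⟩
    rw [hc] at this; exact absurd this (Finset.notMem_empty _)
  have hSnu : S ≠ Finset.univ := by
    have hu : ∃ u : Fin (s+1), u ≠ v := by
      refine ⟨if v = 0 then 1 else 0, ?_⟩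
      split_ifs with h
      · subst h; intro hc; exact absurd (Fin.val_eq_of_eq hc) (by simp; omega)
      · exact fun hc => h hc.symm
    obtain ⟨u, hu⟩ := hu
    obtain ⟨i, hi⟩ := R.hasZero u
    intro hc
    have : i ∈ S := hc ▸ Finset.mem_univ i
    have := (Finset.mem_filter.1 this).2
    rw [hi] at this; exact hu this
  exact hsub S T (fun h => hSne h.1) (fun h => hSnu h.1) hd

/-- (a) Every finite tree with at least two vertices has a leaf; (b) hence if no
nonempty proper subfamily of the genus-zero singularity pattern sums to `-1`,
then no graph representation of level `≥ 1` exists, i.e. the stratum is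
irreducible (`κ = 0`). -/
theorem stmt18 :
    (∀ (V : Type) [Fintype V] (G : SimpleGraph V) [DecidableRel G.Adj],
        G.IsTree → 2 ≤ Fintype.card V → ∃ v : V, G.degree v = 1) ∧
    (∀ (n p : ℕ) (a : Fin n → ℤ) (b : Fin p → ℤ),
      (∀ i, 0 < a i) → (∀ j, 0 < b j) →
      (∑ i, a i - ∑ j, b j = -2) →
      (∀ (S : Finset (Fin n)) (T : Finset (Fin p)),
        ¬(S = ∅ ∧ T = ∅) → ¬(S = Finset.univ ∧ T = Finset.univ) →
        ∑ i ∈ S, a i - ∑ j ∈ T, b j ≠ -1) →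
      ∀ s : ℕ, 1 ≤ s → ¬ Nonempty (GraphRep n p a b s)) := by
  constructor
  · exact aux_treeleaf
  · intro n p a b _ _ hsum hsub s hs
    exact aux_partb n p a b hsum hsub s hs
end
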